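/- arXiv:2411.00502 — 5 statements merged into one kernel-verified Lean document; each statement's English description precedes it below -/
import Mathlib

section
/- Let H be an n-dimensional Hilbert space and {q_i}_{i=1}^N a weight number sequence (q_i ≥ 1, Σ 1/q_i = n). Then there exists a Parseval frame F = {f_i}_{i=1}^N for H with ‖f_i‖ = 1/√(q_i) for every i. -/
open scoped InnerProductSpace

/-! We prove more generally that any weights `cᵢ ∈ [0, 1]` summing to the dimension are the
squared norms of a Parseval frame, by induction on their number. Two orthogonal vectors `u, v` of a
Parseval frame may be replaced by `a u + b v, b u - a v` whenever `a² + b² = 1`; this moves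
`‖u‖², ‖v‖²` to any pair `c₀, c₁` with the same sum and lying between them. If `c₀ + c₁ ≤ 1`, take
for `u` the first vector of a frame with weights `(c₀ + c₁, c₂, …)` and `v = 0`; otherwise take a
unit vector `u = e` and for `v` the first vector of a frame of `e^⊥` with weights
`(c₀ + c₁ - 1, c₂, …)`. -/

open Module

section

variable {𝕜 : Type*} [RCLike 𝕜] {E : Type*} [NormedAddCommGroup E] [InnerProductSpace 𝕜 E]

variable (𝕜) in
def IsParsevalFrame {ι : Type*} [Fintype ι] (f : ι → E) : Prop :=
  ∀ x, ∑ i, ⟪f i, x⟫_𝕜 • f i = x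

theorem IsParsevalFrame.of_subsingleton [Subsingleton E] {ι : Type*} [Fintype ι] (f : ι → E) :
    IsParsevalFrame 𝕜 f :=
  fun _ => Subsingleton.elim _ _

theorem OrthonormalBasis.isParsevalFrame {ι : Type*} [Fintype ι] (b : OrthonormalBasis ι 𝕜 E) :
    IsParsevalFrame 𝕜 b :=
  b.sum_repr'

theorem isParsevalFrame_cons_iff {n : ℕ} {u : E} {g : Fin n → E} :
    IsParsevalFrame 𝕜 (Fin.cons u g : Fin (n + 1) → E) ↔
      ∀ x, ⟪u, x⟫_𝕜 • u + ∑ i, ⟪g i, x⟫_𝕜 • g i = x := by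
  simp only [IsParsevalFrame, Fin.sum_univ_succ, Fin.cons_zero, Fin.cons_succ]

theorem isParsevalFrame_cons_cons_iff {n : ℕ} {u v : E} {g : Fin n → E} :
    IsParsevalFrame 𝕜 (Fin.cons u (Fin.cons v g) : Fin (n + 2) → E) ↔
      ∀ x, ⟪u, x⟫_𝕜 • u + ⟪v, x⟫_𝕜 • v + ∑ i, ⟪g i, x⟫_𝕜 • g i = x := by
  simp only [IsParsevalFrame, Fin.sum_univ_succ, Fin.cons_zero, Fin.cons_succ, add_assoc]

theorem IsParsevalFrame.cons_zero {n : ℕ} {g : Fin n → E} (hg : IsParsevalFrame 𝕜 g) :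
    IsParsevalFrame 𝕜 (Fin.cons 0 g : Fin (n + 1) → E) :=
  isParsevalFrame_cons_iff.2 fun x => by simpa using hg x

theorem IsParsevalFrame.cons_of_orthogonal {n : ℕ} {e : E} (he : ‖e‖ = 1)
    {g : Fin n → (𝕜 ∙ e)ᗮ} (hg : IsParsevalFrame 𝕜 g) :
    IsParsevalFrame 𝕜 (Fin.cons e fun i => (g i : E) : Fin (n + 1) → E) := by
  refine isParsevalFrame_cons_iff.2 fun x => ?_
  have hproj : ∑ i, ⟪(g i : E), x⟫_𝕜 • (g i : E) = (𝕜 ∙ e)ᗮ.starProjection x := by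
    simpa using congrArg Subtype.val (hg ((𝕜 ∙ e)ᗮ.orthogonalProjectionOnto x))
  rw [hproj, Submodule.starProjection_orthogonal_val, Submodule.starProjection_unit_singleton 𝕜 he,
    add_sub_cancel]

theorem IsParsevalFrame.rotate {n : ℕ} {u v : E} {g : Fin n → E}
    (h : IsParsevalFrame 𝕜 (Fin.cons u (Fin.cons v g) : Fin (n + 2) → E)) {a b : ℝ}
    (hab : a ^ 2 + b ^ 2 = 1) :
    IsParsevalFrame 𝕜 (Fin.cons ((a : 𝕜) • u + (b : 𝕜) • v)
      (Fin.cons ((b : 𝕜) • u - (a : 𝕜) • v) g) : Fin (n + 2) → E) := by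
  rw [isParsevalFrame_cons_cons_iff] at h ⊢
  intro x
  have hab' : (a : 𝕜) ^ 2 + (b : 𝕜) ^ 2 = 1 := by exact_mod_cast hab
  convert h x using 2
  simp only [inner_add_left, inner_sub_left, inner_smul_left, RCLike.conj_ofReal, smul_add,
    smul_sub, smul_smul]
  match_scalars
  · linear_combination ⟪u, x⟫_𝕜 * hab'
  · linear_combination ⟪v, x⟫_𝕜 * hab'

theorem norm_sq_smul_add_smul_of_inner_eq_zero {u v : E} (h : ⟪u, v⟫_𝕜 = 0) (a b : ℝ) :
    ‖(a : 𝕜) • u + (b : 𝕜) • v‖ ^ 2 = a ^ 2 * ‖u‖ ^ 2 + b ^ 2 * ‖v‖ ^ 2 := by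
  have horth : ⟪(a : 𝕜) • u, (b : 𝕜) • v⟫_𝕜 = 0 := by
    rw [inner_smul_left, inner_smul_right, h, mul_zero, mul_zero]
  rw [sq, norm_add_sq_eq_norm_sq_add_norm_sq_of_inner_eq_zero _ _ horth, norm_smul, norm_smul,
    RCLike.norm_ofReal, RCLike.norm_ofReal, ← sq, ← sq, mul_pow, mul_pow, sq_abs, sq_abs]

theorem exists_sq_add_sq_eq_one_of_mem_uIcc {s t c : ℝ} (hc : c ∈ Set.uIcc t s) :
    ∃ a b : ℝ, a ^ 2 + b ^ 2 = 1 ∧ a ^ 2 * s + b ^ 2 * t = c ∧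
      b ^ 2 * s + a ^ 2 * t = s + t - c := by
  rw [← segment_eq_uIcc] at hc
  obtain ⟨p, q, hp, hq, hpq, rfl⟩ := hc
  refine ⟨√q, √p, ?_, ?_, ?_⟩ <;> simp only [Real.sq_sqrt hp, Real.sq_sqrt hq, smul_eq_mul]
  · linear_combination hpq
  · ring
  · linear_combination (s + t) * hpq

theorem IsParsevalFrame.exists_cons_cons_norm_sq {n : ℕ} {u v : E} {g : Fin n → E}
    (h : IsParsevalFrame 𝕜 (Fin.cons u (Fin.cons v g) : Fin (n + 2) → E)) (huv : ⟪u, v⟫_𝕜 = 0)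
    {c₀ c₁ : ℝ} (hc₀ : c₀ ∈ Set.uIcc (‖v‖ ^ 2) (‖u‖ ^ 2)) (hc : c₀ + c₁ = ‖u‖ ^ 2 + ‖v‖ ^ 2) :
    ∃ p q : E, IsParsevalFrame 𝕜 (Fin.cons p (Fin.cons q g) : Fin (n + 2) → E) ∧
      ‖p‖ ^ 2 = c₀ ∧ ‖q‖ ^ 2 = c₁ := by
  obtain ⟨a, b, hab, ha, hb⟩ := exists_sq_add_sq_eq_one_of_mem_uIcc hc₀
  refine ⟨_, _, h.rotate hab, ?_, ?_⟩
  · rw [norm_sq_smul_add_smul_of_inner_eq_zero huv, mul_comm, ← ha]; ring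
  · rw [sub_eq_add_neg, ← neg_smul, ← RCLike.ofReal_neg,
      norm_sq_smul_add_smul_of_inner_eq_zero huv]
    linear_combination hb - hc

theorem IsParsevalFrame.exists_cons_cons_of_norm_sq_head {n : ℕ} {g : Fin (n + 1) → E}
    (hg : IsParsevalFrame 𝕜 g) {c₀ c₁ : ℝ} (h₀ : 0 ≤ c₀) (h₁ : 0 ≤ c₁)
    (hg₀ : ‖g 0‖ ^ 2 = c₀ + c₁) :
    ∃ p q : E, IsParsevalFrame 𝕜 (Fin.cons p (Fin.cons q (Fin.tail g)) : Fin (n + 2) → E) ∧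
      ‖p‖ ^ 2 = c₀ ∧ ‖q‖ ^ 2 = c₁ := by
  have h : IsParsevalFrame 𝕜 (Fin.cons 0 (Fin.cons (g 0) (Fin.tail g)) : Fin (n + 2) → E) := by
    rw [Fin.cons_self_tail]
    exact hg.cons_zero
  refine h.exists_cons_cons_norm_sq (inner_zero_left _) ?_ (by simp [hg₀])
  rw [hg₀, norm_zero, Set.mem_uIcc]
  exact Or.inr ⟨by simp [h₀], by linarith⟩

theorem IsParsevalFrame.exists_cons_cons_of_orthogonal {n : ℕ} {e : E} (he : ‖e‖ = 1)
    {g : Fin (n + 1) → (𝕜 ∙ e)ᗮ} (hg : IsParsevalFrame 𝕜 g) {c₀ c₁ : ℝ} (h₀ : c₀ ≤ 1)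
    (h₁ : c₁ ≤ 1) (hg₀ : ‖g 0‖ ^ 2 = c₀ + c₁ - 1) :
    ∃ p q : E, IsParsevalFrame 𝕜
        (Fin.cons p (Fin.cons q fun i => (g i.succ : E)) : Fin (n + 2) → E) ∧
      ‖p‖ ^ 2 = c₀ ∧ ‖q‖ ^ 2 = c₁ := by
  have h := hg.cons_of_orthogonal he
  rw [← Fin.cons_self_tail fun i => (g i : E)] at h
  have hge : ⟪e, (g 0 : E)⟫_𝕜 = 0 :=
    Submodule.inner_right_of_mem_orthogonal (Submodule.mem_span_singleton_self e) (g 0).2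
  refine h.exists_cons_cons_norm_sq hge ?_ (by rw [he, ← Submodule.coe_norm, hg₀]; ring)
  rw [he, ← Submodule.coe_norm, hg₀, Set.mem_uIcc]
  exact Or.inl ⟨by linarith, by simpa using h₀⟩

theorem exists_isParsevalFrame_fin_one [FiniteDimensional 𝕜 E] (hE : finrank 𝕜 E ≤ 1) :
    ∃ f : Fin 1 → E, IsParsevalFrame 𝕜 f ∧ ‖f 0‖ ^ 2 = finrank 𝕜 E := by
  obtain hE | hE : finrank 𝕜 E = 0 ∨ finrank 𝕜 E = 1 := by omega
  · have : Subsingleton E := finrank_zero_iff.1 hE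
    exact ⟨0, .of_subsingleton _, by simp [hE]⟩
  · let b := (stdOrthonormalBasis 𝕜 E).reindex (finCongr hE)
    exact ⟨b, b.isParsevalFrame, by simp [hE]⟩

variable (𝕜) in
theorem exists_norm_eq_one_finrank_orthogonal_add_one [FiniteDimensional 𝕜 E]
    (hE : 0 < finrank 𝕜 E) : ∃ e : E, ‖e‖ = 1 ∧ (finrank 𝕜 (𝕜 ∙ e)ᗮ : ℝ) + 1 = finrank 𝕜 E := by
  set e := stdOrthonormalBasis 𝕜 E ⟨0, hE⟩
  have he : ‖e‖ = 1 := by simp [e]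
  have := Submodule.finrank_add_finrank_orthogonal (𝕜 ∙ e)
  rw [finrank_span_singleton (norm_ne_zero_iff.1 (he ▸ one_ne_zero))] at this
  exact ⟨e, he, by exact_mod_cast by omega⟩

theorem exists_isParsevalFrame_norm_sq_eq [FiniteDimensional 𝕜 E] (N : ℕ) (c : Fin N → ℝ)
    (h₀ : ∀ i, 0 ≤ c i) (h₁ : ∀ i, c i ≤ 1) (hc : ∑ i, c i = finrank 𝕜 E) :
    ∃ f : Fin N → E, IsParsevalFrame 𝕜 f ∧ ∀ i, ‖f i‖ ^ 2 = c i := by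
  induction N using Nat.twoStepInduction generalizing E with
  | zero =>
    rw [Finset.univ_eq_empty, Finset.sum_empty] at hc
    have : Subsingleton E := finrank_zero_iff.1 (by exact_mod_cast hc.symm)
    exact ⟨0, .of_subsingleton _, fun i => i.elim0⟩
  | one =>
    rw [Fin.sum_univ_one] at hc
    obtain ⟨f, hf, hf₀⟩ := exists_isParsevalFrame_fin_one (E := E) (𝕜 := 𝕜)
      (by exact_mod_cast hc ▸ h₁ 0)
    exact ⟨f, hf, fun i => by rw [Subsingleton.elim i 0, hf₀, hc]⟩
  | more n _ ih =>
    have hc' : c 0 + c 1 + ∑ i : Fin n, c i.succ.succ = finrank 𝕜 E := by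
      simpa [Fin.sum_univ_succ, add_assoc] using hc
    have hrest₀ (i : Fin n) : 0 ≤ c i.succ.succ := h₀ _
    have hrest₁ (i : Fin n) : c i.succ.succ ≤ 1 := h₁ _
    by_cases hc01 : c 0 + c 1 ≤ 1
    · obtain ⟨g, hg, hgn⟩ := ih (Fin.cons (c 0 + c 1) fun i => c i.succ.succ)
        (Fin.forall_fin_succ.2 ⟨by simpa using add_nonneg (h₀ 0) (h₀ 1), by simpa using hrest₀⟩)
        (Fin.forall_fin_succ.2 ⟨by simpa using hc01, by simpa using hrest₁⟩)
        (by simpa [Fin.sum_cons] using hc')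
      obtain ⟨p, q, hpq, hp, hq⟩ :=
        hg.exists_cons_cons_of_norm_sq_head (h₀ 0) (h₀ 1) (by simpa using hgn 0)
      refine ⟨_, hpq, Fin.forall_fin_succ.2 ⟨hp, Fin.forall_fin_succ.2 ⟨hq, fun i => ?_⟩⟩⟩
      simpa [Fin.tail] using hgn i.succ
    · rw [not_le] at hc01
      have hE : 0 < finrank 𝕜 E := by
        have hrest : 0 ≤ ∑ i : Fin n, c i.succ.succ := Finset.sum_nonneg fun i _ => hrest₀ i
        have : (1 : ℝ) < finrank 𝕜 E := by linarith
        exact_mod_cast one_pos.trans this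
      obtain ⟨e, he, hK⟩ := exists_norm_eq_one_finrank_orthogonal_add_one 𝕜 hE
      obtain ⟨g, hg, hgn⟩ := ih (E := (𝕜 ∙ e)ᗮ) (Fin.cons (c 0 + c 1 - 1) fun i => c i.succ.succ)
        (Fin.forall_fin_succ.2 ⟨by simpa using hc01.le, by simpa using hrest₀⟩)
        (Fin.forall_fin_succ.2 ⟨by simpa using by linarith [h₁ 0, h₁ 1], by simpa using hrest₁⟩)
        (by simp only [Fin.sum_cons]; linarith)
      obtain ⟨p, q, hpq, hp, hq⟩ :=
        hg.exists_cons_cons_of_orthogonal he (h₁ 0) (h₁ 1) (by simpa using hgn 0)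
      refine ⟨_, hpq, Fin.forall_fin_succ.2 ⟨hp, Fin.forall_fin_succ.2 ⟨hq, fun i => ?_⟩⟩⟩
      simpa using hgn i.succ

end

/-- For any weight number sequence there exists a probabilistic equal norm
Parseval frame, i.e. a Parseval frame with `‖f_i‖ = 1/√(q_i)`. -/
theorem stmt_4 {H : Type*} [NormedAddCommGroup H] [InnerProductSpace ℂ H]
    [FiniteDimensional ℂ H] {N : ℕ} (q : Fin N → ℝ)
    (hq1 : ∀ i, 1 ≤ q i) (hqs : ∑ i, 1 / q i = (Module.finrank ℂ H : ℝ)) :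
    ∃ f : Fin N → H, (∀ x : H, ∑ i, ⟪f i, x⟫_ℂ • f i = x) ∧
      ∀ i, ‖f i‖ = 1 / Real.sqrt (q i) := by
  have hq0 i : 0 < q i := zero_lt_one.trans_le (hq1 i)
  obtain ⟨f, hf, hnorm⟩ := exists_isParsevalFrame_norm_sq_eq N (fun i => 1 / q i)
    (fun i => one_div_nonneg.2 (hq0 i).le) (fun i => (div_le_one (hq0 i)).2 (hq1 i)) hqs
  refine ⟨f, hf, fun i => ?_⟩
  rw [← Real.sqrt_sq (norm_nonneg _), hnorm, Real.sqrt_div' _ (hq0 i).le, Real.sqrt_one]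
end

section
/- Let H be an n-dimensional Hilbert space, {q_i}_{i=1}^N a weight number sequence (q_i ≥ 1, Σ 1/q_i = n), and 0 < λ < 1. An (N,n) dual pair (F,G) satisfies max_{1≤i≤N} q_i(λ|⟨f_i, g_i⟩| + (1−λ)‖f_i‖‖g_i‖) = 1 if and only if ⟨f_i, g_i⟩ = ‖f_i‖‖g_i‖ = 1/q_i for all 1 ≤ i ≤ N. -/
open scoped InnerProductSpace

/-- For `0 < t < 1`, an `(N,n)` dual pair has averaged measure equal to `1`
iff `⟨f_i,g_i⟩ = ‖f_i‖‖g_i‖ = 1/q_i` for all `i`. -/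
theorem stmt_5 {H : Type*} [NormedAddCommGroup H] [InnerProductSpace ℂ H]
    [FiniteDimensional ℂ H] {N : ℕ} [NeZero N]
    (f g : Fin N → H) (q : Fin N → ℝ)
    (hframe : Submodule.span ℂ (Set.range f) = ⊤)
    (hdual : ∀ x : H, ∑ i, ⟪g i, x⟫_ℂ • f i = x)
    (hq1 : ∀ i, 1 ≤ q i) (hqs : ∑ i, 1 / q i = (Module.finrank ℂ H : ℝ))
    (t : ℝ) (ht0 : 0 < t) (ht1 : t < 1) :
    Finset.univ.sup' Finset.univ_nonempty
      (fun i => q i * (t * ‖⟪f i, g i⟫_ℂ‖ + (1 - t) * ‖f i‖ * ‖g i‖)) = 1 ↔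
    ∀ i, ⟪f i, g i⟫_ℂ = (1 / (q i : ℂ)) ∧ ‖f i‖ * ‖g i‖ = 1 / q i := by
  have hqpos : ∀ i, 0 < q i := fun i => lt_of_lt_of_le one_pos (hq1 i)
  constructor
  · intro h
    -- all terms are ≤ 1
    have hle : ∀ i, q i * (t * ‖⟪f i, g i⟫_ℂ‖ + (1 - t) * ‖f i‖ * ‖g i‖) ≤ 1 := by
      intro i
      have := Finset.le_sup' (f := fun i =>
        q i * (t * ‖⟪f i, g i⟫_ℂ‖ + (1 - t) * ‖f i‖ * ‖g i‖)) (Finset.mem_univ i)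
      rw [h] at this
      exact this
    have hcs : ∀ i, ‖⟪f i, g i⟫_ℂ‖ ≤ ‖f i‖ * ‖g i‖ := fun i => norm_inner_le_norm _ _
    have habs : ∀ i, ‖⟪f i, g i⟫_ℂ‖ ≤ 1 / q i := by
      intro i
      rw [le_div_iff₀ (hqpos i)]
      nlinarith [hle i, hcs i, hqpos i, norm_nonneg (⟪f i, g i⟫_ℂ),
        mul_nonneg (mul_nonneg (hqpos i).le (by linarith : (0:ℝ) ≤ 1 - t))
          (sub_nonneg.mpr (hcs i))]
    -- trace identity
    have htrace : ∑ i, ⟪g i, f i⟫_ℂ = (Module.finrank ℂ H : ℂ) := by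
      classical
      set b := stdOrthonormalBasis ℂ H
      have key : ∀ i, ⟪g i, f i⟫_ℂ = ∑ j, ⟪g i, b j⟫_ℂ * ⟪b j, f i⟫_ℂ := fun i =>
        (b.sum_inner_mul_inner (g i) (f i)).symm
      calc ∑ i, ⟪g i, f i⟫_ℂ = ∑ i, ∑ j, ⟪g i, b j⟫_ℂ * ⟪b j, f i⟫_ℂ := by
            exact Finset.sum_congr rfl fun i _ => key i
        _ = ∑ j, ∑ i, ⟪g i, b j⟫_ℂ * ⟪b j, f i⟫_ℂ := Finset.sum_comm
        _ = ∑ _j : Fin (Module.finrank ℂ H), (1 : ℂ) := by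
            refine Finset.sum_congr rfl fun j _ => ?_
            have h1 : ⟪b j, ∑ i, ⟪g i, b j⟫_ℂ • f i⟫_ℂ = ⟪b j, b j⟫_ℂ := by
              rw [hdual (b j)]
            rw [inner_sum] at h1
            simp_rw [inner_smul_right] at h1
            calc ∑ i, ⟪g i, b j⟫_ℂ * ⟪b j, f i⟫_ℂ = ⟪b j, b j⟫_ℂ := by
                  rw [← h1]
              _ = (1 : ℂ) := by
                  have hb := b.orthonormal
                  rw [orthonormal_iff_ite] at hb
                  simpa using hb j j
        _ = (Module.finrank ℂ H : ℂ) := by simp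
    -- real parts
    have hre_sum : ∑ i, (⟪g i, f i⟫_ℂ).re = (Module.finrank ℂ H : ℝ) := by
      have := congrArg Complex.re htrace
      simpa [Complex.re_sum] using this
    have hre_le : ∀ i ∈ Finset.univ, (⟪g i, f i⟫_ℂ).re ≤ 1 / q i := by
      intro i _
      have h1 : (⟪g i, f i⟫_ℂ).re ≤ ‖⟪g i, f i⟫_ℂ‖ := Complex.re_le_norm _
      have h2 : ‖⟪g i, f i⟫_ℂ‖ = ‖⟪f i, g i⟫_ℂ‖ := norm_inner_symm _ _
      linarith [habs i, h1, h2.le, h2.ge]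
    have hre_eq : ∀ i, (⟪g i, f i⟫_ℂ).re = 1 / q i := by
      have : ∑ i, (⟪g i, f i⟫_ℂ).re = ∑ i, 1 / q i := by rw [hre_sum, hqs]
      intro i
      exact (Finset.sum_eq_sum_iff_of_le hre_le).mp this i (Finset.mem_univ i)
    intro i
    -- the inner product is real and equals 1/q i
    have hz : ⟪g i, f i⟫_ℂ = ((1 / q i : ℝ) : ℂ) := by
      have hnorm : ‖⟪g i, f i⟫_ℂ‖ = ‖⟪f i, g i⟫_ℂ‖ := norm_inner_symm _ _
      have hn : ‖⟪g i, f i⟫_ℂ‖ ≤ 1 / q i := hnorm ▸ habs i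
      have hsq : ‖⟪g i, f i⟫_ℂ‖ ^ 2 = (⟪g i, f i⟫_ℂ).re ^ 2 + (⟪g i, f i⟫_ℂ).im ^ 2 := by
        rw [Complex.sq_norm, Complex.normSq_apply]; ring
      have him : (⟪g i, f i⟫_ℂ).im = 0 := by
        nlinarith [hre_eq i, hn, norm_nonneg (⟪g i, f i⟫_ℂ), hsq]
      apply Complex.ext
      · simp [hre_eq i]
      · simp [him]
    have hinner : ⟪f i, g i⟫_ℂ = (1 / (q i : ℂ)) := by
      rw [← inner_conj_symm (f i) (g i), hz, Complex.conj_ofReal]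
      push_cast
      ring
    refine ⟨hinner, ?_⟩
    -- norms
    have hub : ‖f i‖ * ‖g i‖ ≤ 1 / q i := by
      have h1 := hle i
      have h2 : ‖⟪f i, g i⟫_ℂ‖ = 1 / q i := by
        rw [hinner, norm_div, norm_one, Complex.norm_real, Real.norm_eq_abs,
          abs_of_pos (hqpos i)]
      rw [h2] at h1
      have hq := hqpos i
      rw [le_div_iff₀ hq]
      have : q i * (t * (1 / q i)) = t := by field_simp
      nlinarith
    have hlb : 1 / q i ≤ ‖f i‖ * ‖g i‖ := by
      have h2 : ‖⟪f i, g i⟫_ℂ‖ = 1 / q i := by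
        rw [hinner, norm_div, norm_one, Complex.norm_real, Real.norm_eq_abs,
          abs_of_pos (hqpos i)]
      linarith [hcs i, h2.ge, h2.le]
    linarith
  · intro h
    have hval : ∀ i, q i * (t * ‖⟪f i, g i⟫_ℂ‖ + (1 - t) * ‖f i‖ * ‖g i‖) = 1 := by
      intro i
      obtain ⟨h1, h2⟩ := h i
      have h3 : ‖⟪f i, g i⟫_ℂ‖ = 1 / q i := by
        rw [h1, norm_div, norm_one, Complex.norm_real, Real.norm_eq_abs,
          abs_of_pos (hqpos i)]
      rw [h3, mul_assoc (1 - t), h2]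
      have hq := (hqpos i).ne'
      field_simp
      ring
    apply le_antisymm
    · exact Finset.sup'_le _ _ fun i _ => (hval i).le
    · have := Finset.le_sup' (f := fun i =>
        q i * (t * ‖⟪f i, g i⟫_ℂ‖ + (1 - t) * ‖f i‖ * ‖g i‖))
        (Finset.mem_univ (⟨0, Nat.pos_of_ne_zero (NeZero.ne N)⟩ : Fin N))
      rw [hval] at this
      exact this
end

section
/- Let H be an n-dimensional Hilbert space and {q_i}_{i=1}^N a weight number sequence. An (N,n) dual pair (F,G) satisfies max_{1≤i≤N} q_i ‖f_i‖‖g_i‖ = 1 if and only if ‖f_i‖‖g_i‖ = 1/q_i for all i. -/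
open scoped InnerProductSpace

/-! If `∑ ⟪g i, x⟫ • f i = x` for all `x`, the rank-one operators `x ↦ ⟪g i, x⟫ • f i` sum to the
identity, so taking traces gives `∑ ⟪g i, f i⟫ = n`, whence `n ≤ ∑ ‖f i‖‖g i‖` by Cauchy–Schwarz.
If moreover `max_i q_i ‖f_i‖‖g_i‖ = 1`, each `‖f_i‖‖g_i‖ ≤ 1/q_i`, and these bounds sum to
`∑ 1/q_i = n`, so all of them are equalities. -/

theorem Finset.sup'_mul_eq_one_iff {ι : Type*} {s : Finset ι} (hs : s.Nonempty)
    {q a : ι → ℝ} (hq : ∀ i ∈ s, 0 < q i) (hsum : ∑ i ∈ s, 1 / q i ≤ ∑ i ∈ s, a i) :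
    s.sup' hs (fun i => q i * a i) = 1 ↔ ∀ i ∈ s, a i = 1 / q i := by
  constructor
  · intro hsup
    have hle : ∀ i ∈ s, a i ≤ 1 / q i := fun i hi => by
      rw [le_div_iff₀ (hq i hi), mul_comm, ← hsup]
      exact s.le_sup' (fun i => q i * a i) hi
    exact (Finset.sum_eq_sum_iff_of_le hle).1 (le_antisymm (Finset.sum_le_sum hle) hsum)
  · intro ha
    have hone : ∀ i ∈ s, q i * a i = 1 := fun i hi => by
      rw [ha i hi, mul_one_div_cancel (hq i hi).ne']
    rw [Finset.sup'_congr hs rfl hone, Finset.sup'_const]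

theorem sum_inner_eq_finrank_of_sum_smul_eq_self {𝕜 E ι : Type*} [RCLike 𝕜]
    [NormedAddCommGroup E] [InnerProductSpace 𝕜 E] [FiniteDimensional 𝕜 E] [Fintype ι]
    (f g : ι → E) (h : ∀ x, ∑ i, ⟪g i, x⟫_𝕜 • f i = x) :
    ∑ i, ⟪g i, f i⟫_𝕜 = Module.finrank 𝕜 E := by
  have hid : ∑ i, (InnerProductSpace.rankOne 𝕜 (f i) (g i) : E →L[𝕜] E).toLinearMap = LinearMap.id := by
    ext x
    simp [h]
  simp_rw [← LinearMap.trace_id, ← hid, map_sum, InnerProductSpace.trace_rankOne]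

theorem finrank_le_sum_norm_mul_norm_of_sum_smul_eq_self {𝕜 E ι : Type*} [RCLike 𝕜]
    [NormedAddCommGroup E] [InnerProductSpace 𝕜 E] [FiniteDimensional 𝕜 E] [Fintype ι]
    (f g : ι → E) (h : ∀ x, ∑ i, ⟪g i, x⟫_𝕜 • f i = x) :
    (Module.finrank 𝕜 E : ℝ) ≤ ∑ i, ‖f i‖ * ‖g i‖ :=
  calc (Module.finrank 𝕜 E : ℝ) = ‖∑ i, ⟪g i, f i⟫_𝕜‖ := by
        rw [sum_inner_eq_finrank_of_sum_smul_eq_self f g h, RCLike.norm_natCast]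
    _ ≤ ∑ i, ‖⟪g i, f i⟫_𝕜‖ := norm_sum_le _ _
    _ ≤ ∑ i, ‖f i‖ * ‖g i‖ := Finset.sum_le_sum fun i _ => by
        rw [mul_comm]
        exact norm_inner_le_norm _ _

theorem stmt_6_general {H : Type*} [NormedAddCommGroup H] [InnerProductSpace ℂ H]
    [FiniteDimensional ℂ H] {N : ℕ} [NeZero N]
    (f g : Fin N → H) (q : Fin N → ℝ)
    (hdual : ∀ x : H, ∑ i, ⟪g i, x⟫_ℂ • f i = x)
    (hq1 : ∀ i, 1 ≤ q i) (hqs : ∑ i, 1 / q i = (Module.finrank ℂ H : ℝ)) :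
    Finset.univ.sup' Finset.univ_nonempty (fun i => q i * (‖f i‖ * ‖g i‖)) = 1 ↔
    ∀ i, ‖f i‖ * ‖g i‖ = 1 / q i := by
  have hsum : ∑ i, 1 / q i ≤ ∑ i, ‖f i‖ * ‖g i‖ :=
    hqs ▸ finrank_le_sum_norm_mul_norm_of_sum_smul_eq_self f g hdual
  simpa using Finset.sup'_mul_eq_one_iff Finset.univ_nonempty
    (fun i _ => one_pos.trans_le (hq1 i)) hsum

/-- An `(N,n)` dual pair satisfies `max_i q_i ‖f_i‖‖g_i‖ = 1` iff
`‖f_i‖‖g_i‖ = 1/q_i` for all `i`. -/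
theorem stmt_6 {H : Type*} [NormedAddCommGroup H] [InnerProductSpace ℂ H]
    [FiniteDimensional ℂ H] {N : ℕ} [NeZero N]
    (f g : Fin N → H) (q : Fin N → ℝ)
    (hframe : Submodule.span ℂ (Set.range f) = ⊤)
    (hdual : ∀ x : H, ∑ i, ⟪g i, x⟫_ℂ • f i = x)
    (hq1 : ∀ i, 1 ≤ q i) (hqs : ∑ i, 1 / q i = (Module.finrank ℂ H : ℝ)) :
    Finset.univ.sup' Finset.univ_nonempty (fun i => q i * (‖f i‖ * ‖g i‖)) = 1 ↔
    ∀ i, ‖f i‖ * ‖g i‖ = 1 / q i :=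
  stmt_6_general f g q hdual hq1 hqs
end

section
/- Let H be an n-dimensional Hilbert space and {q_i}_{i=1}^N a weight number sequence. An (N,n) dual pair (F,G) satisfies max_{1≤i≤N} q_i |⟨f_i, g_i⟩| = 1 if and only if ⟨f_i, g_i⟩ = 1/q_i for all i. -/
/-!
The reconstruction formula says that `∑ i, rankOne (f i) (g i)` is the identity, so taking traces
gives `∑ i, ⟪f i, g i⟫ = n = ∑ i, 1 / q i`. If every `|⟪f i, g i⟫|` is at most `1 / q i`, then
equality of the sums forces `Re ⟪f i, g i⟫ = |⟪f i, g i⟫| = 1 / q i` termwise.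
-/

open scoped InnerProductSpace

section

variable {𝕜 E ι : Type*} [RCLike 𝕜] [NormedAddCommGroup E] [InnerProductSpace 𝕜 E] [Fintype ι]

open InnerProductSpace in
theorem sum_inner_eq_finrank_of_reconstruction [FiniteDimensional 𝕜 E] {f g : ι → E}
    (hrec : ∀ x, ∑ i, ⟪g i, x⟫_𝕜 • f i = x) :
    ∑ i, ⟪f i, g i⟫_𝕜 = Module.finrank 𝕜 E := by
  have hid : ∑ i, (rankOne 𝕜 (f i) (g i) : E →ₗ[𝕜] E) = LinearMap.id :=
    LinearMap.ext fun x => by simpa [rankOne_apply] using hrec x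
  have htrace : ∑ i, ⟪g i, f i⟫_𝕜 = Module.finrank 𝕜 E := by
    simpa [map_sum, trace_rankOne] using congrArg (LinearMap.trace 𝕜 E) hid
  have := congrArg (starRingEnd 𝕜) htrace
  simpa only [map_sum, inner_conj_symm, map_natCast] using this

end

namespace RCLike

variable {𝕜 ι : Type*} [RCLike 𝕜]

theorem eq_ofReal_of_norm_le_of_sum_eq {s : Finset ι} {z : ι → 𝕜} {a : ι → ℝ}
    (hle : ∀ i ∈ s, ‖z i‖ ≤ a i) (hsum : ∑ i ∈ s, z i = ∑ i ∈ s, (a i : 𝕜)) :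
    ∀ i ∈ s, z i = a i := by
  have hre_le : ∀ i ∈ s, re (z i) ≤ a i := fun i hi => (re_le_norm _).trans (hle i hi)
  have hre_eq : ∀ i ∈ s, re (z i) = a i := by
    refine (Finset.sum_eq_sum_iff_of_le hre_le).mp ?_
    simpa [map_sum] using congrArg re hsum
  intro i hi
  have hnorm : ‖z i‖ = a i := (hle i hi).antisymm (hre_eq i hi ▸ re_le_norm _)
  have hnorm_le_re : ‖z i‖ ≤ re (z i) := by rw [hnorm, hre_eq i hi]
  rw [norm_le_re_iff_eq_norm.mp hnorm_le_re, hnorm]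

end RCLike

theorem stmt_7_general {H : Type*} [NormedAddCommGroup H] [InnerProductSpace ℂ H]
    [FiniteDimensional ℂ H] {N : ℕ} [NeZero N]
    (f g : Fin N → H) (q : Fin N → ℝ)
    (hdual : ∀ x : H, ∑ i, ⟪g i, x⟫_ℂ • f i = x)
    (hq1 : ∀ i, 1 ≤ q i) (hqs : ∑ i, 1 / q i = (Module.finrank ℂ H : ℝ)) :
    Finset.univ.sup' Finset.univ_nonempty (fun i => q i * ‖⟪f i, g i⟫_ℂ‖) = 1 ↔
    ∀ i, ⟪f i, g i⟫_ℂ = (1 / (q i : ℂ)) := by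
  have hq : ∀ i, 0 < q i := fun i => one_pos.trans_le (hq1 i)
  constructor
  · intro hmax
    have hle : ∀ i ∈ Finset.univ, ‖⟪f i, g i⟫_ℂ‖ ≤ 1 / q i := fun i hi => by
      rw [le_div_iff₀' (hq i), ← hmax]
      exact Finset.le_sup' (fun i => q i * ‖⟪f i, g i⟫_ℂ‖) hi
    have hsum : ∑ i, ⟪f i, g i⟫_ℂ = ∑ i, ((1 / q i : ℝ) : ℂ) := by
      rw [sum_inner_eq_finrank_of_reconstruction hdual, ← Complex.ofReal_sum, hqs,
        Complex.ofReal_natCast]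
    intro i
    simpa using RCLike.eq_ofReal_of_norm_le_of_sum_eq hle hsum i (Finset.mem_univ i)
  · intro h
    have hone : (fun i => q i * ‖⟪f i, g i⟫_ℂ‖) = fun _ => 1 := funext fun i => by
      rw [h i, norm_div, norm_one, Complex.norm_real, Real.norm_of_nonneg (hq i).le,
        mul_one_div_cancel (hq i).ne']
    rw [hone, Finset.sup'_const]

/-- An `(N,n)` dual pair satisfies `max_i q_i |⟨f_i,g_i⟩| = 1` iff
`⟨f_i,g_i⟩ = 1/q_i` for all `i`. -/
theorem stmt_7 {H : Type*} [NormedAddCommGroup H] [InnerProductSpace ℂ H]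
    [FiniteDimensional ℂ H] {N : ℕ} [NeZero N]
    (f g : Fin N → H) (q : Fin N → ℝ)
    (hframe : Submodule.span ℂ (Set.range f) = ⊤)
    (hdual : ∀ x : H, ∑ i, ⟪g i, x⟫_ℂ • f i = x)
    (hq1 : ∀ i, 1 ≤ q i) (hqs : ∑ i, 1 / q i = (Module.finrank ℂ H : ℝ)) :
    Finset.univ.sup' Finset.univ_nonempty (fun i => q i * ‖⟪f i, g i⟫_ℂ‖) = 1 ↔
    ∀ i, ⟪f i, g i⟫_ℂ = (1 / (q i : ℂ)) :=
  stmt_7_general f g q hdual hq1 hqs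
end

section
/- Let F = {f_i}_{i=1}^N be a tight frame with frame bound A for H, {q_i} positive weights, and 0 ≤ λ < 1. If there is a constant c with q_i‖f_i‖² = c for all i, then the canonical dual S_F^{-1}F = {f_i/A} is the unique minimizer among all duals G of F of the quantity max_{1≤i≤N} q_i(λ|⟨f_i, g_i⟩| + (1−λ)‖f_i‖‖g_i‖). -/
open scoped InnerProductSpace

/-
For any dual `g` of a tight frame `f` with bound `A`, expanding each `f i` through the dual
and then through the frame gives the trace identity `A * ∑ re ⟪f i, g i⟫ = ∑ ‖f i‖²`,
which the canonical dual `f i / A` satisfies term by term. Since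
`q i * re ⟪f i, g i⟫ ≤ q i * (t ‖⟪f i, g i⟫‖ + (1 - t) ‖f i‖ ‖g i‖)` and
`q i * ‖f i‖² / A = c` for every `i`, a dual whose cost is at most `c / A` has
`re ⟪f i, g i⟫ ≤ ‖f i‖² / A` for all `i`, hence equality by the trace identity. For `t < 1`
this forces `‖f i‖ ‖g i‖ ≤ re ⟪f i, g i⟫`, the equality case of Cauchy–Schwarz, so `g i = f i / A`.
-/

section MixedInner

variable {𝕜 H : Type*} [RCLike 𝕜] [NormedAddCommGroup H] [InnerProductSpace 𝕜 H]

variable (𝕜) in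
def mixedInner (t : ℝ) (x y : H) : ℝ :=
  t * ‖⟪x, y⟫_𝕜‖ + (1 - t) * ‖x‖ * ‖y‖

theorem re_inner_le_mixedInner {t : ℝ} (ht0 : 0 ≤ t) (ht1 : t ≤ 1) (x y : H) :
    RCLike.re ⟪x, y⟫_𝕜 ≤ mixedInner 𝕜 t x y := by
  have h₁ : RCLike.re ⟪x, y⟫_𝕜 ≤ ‖⟪x, y⟫_𝕜‖ := RCLike.re_le_norm _
  have h₂ : RCLike.re ⟪x, y⟫_𝕜 ≤ ‖x‖ * ‖y‖ := re_inner_le_norm x y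
  unfold mixedInner
  nlinarith

theorem mixedInner_smul_self (t : ℝ) {r : ℝ} (hr : 0 ≤ r) (x : H) :
    mixedInner 𝕜 t x ((r : 𝕜) • x) = r * ‖x‖ ^ 2 := by
  rw [mixedInner, inner_smul_right, inner_self_eq_norm_sq_to_K, norm_smul, norm_mul,
    RCLike.norm_ofReal, abs_of_nonneg hr, norm_pow, RCLike.norm_ofReal, abs_norm]
  ring

theorem eq_smul_of_norm_le_of_re_inner_eq {x y : H} {r : ℝ} (hy : ‖y‖ ≤ r * ‖x‖)
    (hre : RCLike.re ⟪x, y⟫_𝕜 = r * ‖x‖ ^ 2) : y = (r : 𝕜) • x := by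
  have hsq : ‖y‖ ^ 2 ≤ (r * ‖x‖) ^ 2 := pow_le_pow_left₀ (norm_nonneg y) hy 2
  have hdist : ‖y - (r : 𝕜) • x‖ ^ 2 ≤ 0 := by
    rw [norm_sub_sq (𝕜 := 𝕜), inner_smul_right, RCLike.re_ofReal_mul, inner_re_symm, hre,
      norm_smul, RCLike.norm_ofReal]
    nlinarith [sq_abs r]
  rw [← sub_eq_zero, ← norm_eq_zero]
  exact pow_eq_zero_iff two_ne_zero |>.mp (le_antisymm hdist (sq_nonneg _))

theorem eq_smul_of_mixedInner_le {t r : ℝ} {x y : H} (hx : x ≠ 0) (ht0 : 0 ≤ t) (ht1 : t < 1)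
    (hre : RCLike.re ⟪x, y⟫_𝕜 = r * ‖x‖ ^ 2) (hle : mixedInner 𝕜 t x y ≤ r * ‖x‖ ^ 2) :
    y = (r : 𝕜) • x := by
  have hx' : 0 < ‖x‖ := norm_pos_iff.mpr hx
  have hnorm : r * ‖x‖ ^ 2 ≤ ‖⟪x, y⟫_𝕜‖ := hre ▸ RCLike.re_le_norm _
  have hprod : ‖x‖ * ‖y‖ ≤ ‖x‖ * (r * ‖x‖) := by
    unfold mixedInner at hle
    nlinarith [mul_le_mul_of_nonneg_left hnorm ht0]
  exact eq_smul_of_norm_le_of_re_inner_eq (le_of_mul_le_mul_left hprod hx') hre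

end MixedInner

section Frames

variable {𝕜 H ι : Type*} [RCLike 𝕜] [NormedAddCommGroup H] [InnerProductSpace 𝕜 H] [Fintype ι]

variable (𝕜) in
def IsTightFrame (f : ι → H) (A : ℝ) : Prop :=
  ∀ x, ∑ i, ⟪f i, x⟫_𝕜 • f i = (A : 𝕜) • x

variable (𝕜) in
def IsDualFrame (g f : ι → H) : Prop :=
  ∀ x, ∑ i, ⟪g i, x⟫_𝕜 • f i = x

namespace IsTightFrame

variable {f g : ι → H} {A t : ℝ}

theorem isDualFrame_inv_smul (hf : IsTightFrame 𝕜 f A) (hA : A ≠ 0) :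
    IsDualFrame 𝕜 (fun i => ((A⁻¹ : ℝ) : 𝕜) • f i) f := by
  intro x
  simp_rw [inner_smul_left, RCLike.conj_ofReal, mul_smul, ← Finset.smul_sum, hf x, smul_smul]
  rw [← RCLike.ofReal_mul, inv_mul_cancel₀ hA, RCLike.ofReal_one, one_smul]

theorem mul_sum_re_inner_eq_sum_norm_sq (hf : IsTightFrame 𝕜 f A)
    (hg : IsDualFrame 𝕜 g f) : A * ∑ i, RCLike.re ⟪f i, g i⟫_𝕜 = ∑ i, ‖f i‖ ^ 2 := by
  rw [IsTightFrame] at hf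
  rw [IsDualFrame] at hg
  have hsum : (A : 𝕜) * ∑ j, ⟪g j, f j⟫_𝕜 = ∑ i, ⟪f i, f i⟫_𝕜 :=
    calc (A : 𝕜) * ∑ j, ⟪g j, f j⟫_𝕜 = ∑ j, ⟪g j, ∑ i, ⟪f i, f j⟫_𝕜 • f i⟫_𝕜 := by
          simp_rw [hf, inner_smul_right, Finset.mul_sum]
      _ = ∑ i, ⟪f i, ∑ j, ⟪g j, f i⟫_𝕜 • f j⟫_𝕜 := by
          simp_rw [inner_sum, inner_smul_right]
          rw [Finset.sum_comm]
          exact Finset.sum_congr rfl fun _ _ => Finset.sum_congr rfl fun _ _ => mul_comm _ _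
      _ = ∑ i, ⟪f i, f i⟫_𝕜 := by simp_rw [hg]
  have hre := congrArg RCLike.re hsum
  simp_rw [RCLike.re_ofReal_mul, map_sum, inner_self_eq_norm_sq, inner_re_symm (g _)] at hre
  exact hre

theorem exists_ne_zero [Nontrivial H] (hf : IsTightFrame 𝕜 f A) (hA : A ≠ 0) :
    ∃ i, f i ≠ 0 := by
  obtain ⟨x, hx⟩ := exists_ne (0 : H)
  by_contra! h
  have := hf x
  simp only [h, smul_zero, Finset.sum_const_zero] at this
  exact hx ((smul_eq_zero.mp this.symm).resolve_left (RCLike.ofReal_ne_zero.mpr hA))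

theorem eq_inv_smul_of_mixedInner_le (hf : IsTightFrame 𝕜 f A) (hA : A ≠ 0)
    (hg : IsDualFrame 𝕜 g f) (hf0 : ∀ i, f i ≠ 0) (ht0 : 0 ≤ t) (ht1 : t < 1)
    (hle : ∀ i, mixedInner 𝕜 t (f i) (g i) ≤ A⁻¹ * ‖f i‖ ^ 2) :
    g = fun i => ((A⁻¹ : ℝ) : 𝕜) • f i := by
  have hre_le : ∀ i, RCLike.re ⟪f i, g i⟫_𝕜 ≤ A⁻¹ * ‖f i‖ ^ 2 := fun i =>
    (re_inner_le_mixedInner ht0 ht1.le _ _).trans (hle i)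
  have hsum : ∑ i, RCLike.re ⟪f i, g i⟫_𝕜 = ∑ i, A⁻¹ * ‖f i‖ ^ 2 := by
    rw [← Finset.mul_sum, ← hf.mul_sum_re_inner_eq_sum_norm_sq hg, inv_mul_cancel_left₀ hA]
  have hre : ∀ i, RCLike.re ⟪f i, g i⟫_𝕜 = A⁻¹ * ‖f i‖ ^ 2 := fun i =>
    (Finset.sum_eq_sum_iff_of_le fun i _ => hre_le i).mp hsum i (Finset.mem_univ i)
  funext i
  exact eq_smul_of_mixedInner_le (hf0 i) ht0 ht1 (hre i) (hle i)

end IsTightFrame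

end Frames

theorem forall_ne_zero_of_mul_norm_sq_eq {ι E : Type*} [NormedAddCommGroup E] {f : ι → E}
    {q : ι → ℝ} {c : ℝ} (hq : ∀ i, 0 < q i) (hc : ∀ i, q i * ‖f i‖ ^ 2 = c)
    (h : ∃ i, f i ≠ 0) (i : ι) : f i ≠ 0 := by
  obtain ⟨j, hj⟩ := h
  intro hi
  have hc0 : c = 0 := by simpa [hi] using (hc i).symm
  exact mul_ne_zero (hq j).ne' (pow_ne_zero 2 (norm_ne_zero_iff.mpr hj)) (hc0 ▸ hc j)

theorem stmt_13_general {H : Type*} [NormedAddCommGroup H] [InnerProductSpace ℂ H]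
    {N : ℕ} [NeZero N]
    (f : Fin N → H) (q : Fin N → ℝ) (A c : ℝ) (hA : 0 < A)
    (htight : ∀ x : H, ∑ i, ⟪f i, x⟫_ℂ • f i = A • x)
    (hq : ∀ i, 0 < q i) (hc : ∀ i, q i * ‖f i‖ ^ 2 = c)
    (t : ℝ) (ht0 : 0 ≤ t) (ht1 : t < 1) :
    let η : (Fin N → H) → ℝ := fun g => Finset.univ.sup' Finset.univ_nonempty
      (fun i => q i * (t * ‖⟪f i, g i⟫_ℂ‖ + (1 - t) * ‖f i‖ * ‖g i‖))
    let g0 : Fin N → H := fun i => A⁻¹ • f i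
    (∀ x : H, ∑ i, ⟪g0 i, x⟫_ℂ • f i = x) ∧
    ∀ g : Fin N → H, (∀ x : H, ∑ i, ⟪g i, x⟫_ℂ • f i = x) →
      (η g0 ≤ η g ∧ (η g = η g0 → g = g0)) := by
  intro η g0
  have hF : IsTightFrame ℂ f A := fun x =>
    (htight x).trans (Complex.coe_smul A x).symm
  have hg0 : g0 = fun i => ((A⁻¹ : ℝ) : ℂ) • f i := funext fun i => (Complex.coe_smul _ _).symm
  have hcost : ∀ g i, q i * mixedInner ℂ t (f i) (g i) ≤ η g := fun g i =>
    Finset.le_sup' (fun i => q i * mixedInner ℂ t (f i) (g i)) (Finset.mem_univ i)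
  have hcA : ∀ i, q i * (A⁻¹ * ‖f i‖ ^ 2) = c / A := fun i => by rw [← hc i]; ring
  have hη0 : η g0 = c / A := by
    have hterm : ∀ i, q i * mixedInner ℂ t (f i) (g0 i) = c / A := fun i => by
      rw [hg0, ← hcA i]
      congr 1
      exact mixedInner_smul_self t (inv_nonneg.mpr hA.le) (f i)
    exact (Finset.sup'_congr _ rfl fun i _ => hterm i).trans (Finset.sup'_const _ _)
  have hmin : ∀ g, IsDualFrame ℂ g f → η g ≤ c / A → g = g0 := by
    intro g hg hle
    rcases subsingleton_or_nontrivial H with _ | _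
    · exact Subsingleton.elim _ _
    have hf0 := forall_ne_zero_of_mul_norm_sq_eq hq hc (hF.exists_ne_zero hA.ne')
    refine (hF.eq_inv_smul_of_mixedInner_le hA.ne' hg hf0 ht0 ht1 fun i => ?_).trans hg0.symm
    exact le_of_mul_le_mul_left (((hcost g i).trans hle).trans_eq (hcA i).symm) (hq i)
  have hdual0 : IsDualFrame ℂ g0 f := by
    rw [hg0]
    exact hF.isDualFrame_inv_smul hA.ne'
  refine ⟨hdual0, fun g hg => ⟨le_of_not_gt fun hlt => ?_, fun h => hmin g hg (h.trans hη0).le⟩⟩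
  exact hlt.ne (congrArg η (hmin g hg (hlt.trans_eq hη0).le))

/-- For a tight frame with `q_i‖f_i‖² = c` constant and `0 ≤ t < 1`, the
canonical dual `{f_i/A}` is the unique minimizer of the averaged measure among
all dual frames. -/
theorem stmt_13 {H : Type*} [NormedAddCommGroup H] [InnerProductSpace ℂ H]
    [FiniteDimensional ℂ H] {N : ℕ} [NeZero N]
    (f : Fin N → H) (q : Fin N → ℝ) (A c : ℝ) (hA : 0 < A)
    (htight : ∀ x : H, ∑ i, ⟪f i, x⟫_ℂ • f i = A • x)
    (hq : ∀ i, 0 < q i) (hc : ∀ i, q i * ‖f i‖ ^ 2 = c)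
    (t : ℝ) (ht0 : 0 ≤ t) (ht1 : t < 1) :
    let η : (Fin N → H) → ℝ := fun g => Finset.univ.sup' Finset.univ_nonempty
      (fun i => q i * (t * ‖⟪f i, g i⟫_ℂ‖ + (1 - t) * ‖f i‖ * ‖g i‖))
    let g0 : Fin N → H := fun i => A⁻¹ • f i
    (∀ x : H, ∑ i, ⟪g0 i, x⟫_ℂ • f i = x) ∧
    ∀ g : Fin N → H, (∀ x : H, ∑ i, ⟪g i, x⟫_ℂ • f i = x) →
      (η g0 ≤ η g ∧ (η g = η g0 → g = g0)) :=
  stmt_13_general f q A c hA htight hq hc t ht0 ht1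
end
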